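/- Let (X,T) be a topological dynamical system and h : X → 𝕋 continuous such that the skew product (X × 𝕋, T_h), T_h(x,t) = (Tx, t + h(x)), has Bohr₀ large returns. Then for every continuous g : 𝕋 → 𝕋, the system (X × 𝕋², T_{h,g}) defined by T_{h,g}(x,t,s) = (Tx, t + h(x), s + g(t)) has Bohr₀ large returns. -/

import Mathlib

open Function Metric Set Filter

noncomputable section

abbrev Torus := AddCircle (1 : ℝ)

/-- `A ⊆ ℕ` is a Bohr₀ set: it contains all positive `n` with `‖nα‖ < δ`
for some `δ > 0`, `d ∈ ℕ`, `α ∈ 𝕋^d` (L¹ distance to zero). -/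
def IsBohr0 (A : Set ℕ) : Prop :=
  ∃ (d : ℕ) (α : Fin d → Torus) (δ : ℝ), 0 < δ ∧
    ∀ n : ℕ, 0 < n → (∑ i, ‖n • α i‖) < δ → n ∈ A


/- ## representative in (-1/2, 1/2] -/
def rep (t : Torus) : ℝ := (AddCircle.equivIoc 1 (-(2⁻¹)) t : ℝ)

lemma rep_mem (t : Torus) : rep t ∈ Ioc (-(2⁻¹):ℝ) (2⁻¹) := by
  have := (AddCircle.equivIoc 1 (-(2⁻¹)) t).2
  norm_num at this ⊢
  exact this

lemma rep_coe (t : Torus) : ((rep t : ℝ) : Torus) = t := by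
  change (AddCircle.equivIoc 1 (-(2⁻¹))).symm _ = t
  exact (AddCircle.equivIoc 1 (-(2⁻¹))).symm_apply_apply t

lemma rep_zero : rep 0 = 0 := by
  have h0 : (0:ℝ) ∈ Ioc (-(2⁻¹):ℝ) (-(2⁻¹) + 1) := by norm_num
  have := AddCircle.liftIoc_coe_apply (p := 1) (a := -(2⁻¹)) (f := id) h0
  simpa [AddCircle.liftIoc, rep] using this

lemma norm_coe_le (x : ℝ) : ‖((x:ℝ) : Torus)‖ ≤ |x| := by
  simpa using QuotientAddGroup.norm_mk_le_norm (S := AddSubgroup.zmultiples (1:ℝ)) (m := x)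

lemma rep_continuousAt {t : Torus} (ht : ‖t‖ < 2⁻¹) : ContinuousAt rep t := by
  have hne : t ≠ ((-(2⁻¹) : ℝ) : Torus) := by
    intro h
    rw [h] at ht
    have : ‖((-(2⁻¹):ℝ) : Torus)‖ = 2⁻¹ := by
      rw [AddCircle.norm_eq]; norm_num [round_eq]
    rw [this] at ht; exact lt_irrefl _ ht
  exact continuousAt_subtype_val.comp (AddCircle.continuousAt_equivIoc 1 (-(2⁻¹)) hne)

/- ## pasting continuity on two closed sets -/
lemma contOn_union {α β : Type*} [TopologicalSpace α] [TopologicalSpace β]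
    {f : α → β} {A B : Set α} (hA : IsClosed A) (hB : IsClosed B)
    (ha : ContinuousOn f A) (hb : ContinuousOn f B) : ContinuousOn f (A ∪ B) := by
  intro x hx
  have h1 : ContinuousWithinAt f A x := by
    by_cases h : x ∈ A
    · exact ha x h
    · exact continuousWithinAt_of_notMem_closure (by rwa [hA.closure_eq])
  have h2 : ContinuousWithinAt f B x := by
    by_cases h : x ∈ B
    · exact hb x h
    · exact continuousWithinAt_of_notMem_closure (by rwa [hB.closure_eq])
  exact h1.union h2

/- ## preconnected sets of integers are subsingletons -/
lemma preconn_int {S : Set ℝ} (hS : IsPreconnected S) (hsub : ∀ x ∈ S, ∃ z : ℤ, x = z)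
    {x y : ℝ} (hx : x ∈ S) (hy : y ∈ S) : x = y := by
  have key : ∀ a b : ℤ, a < b → ((a:ℝ)) ∈ S → ((b:ℝ)) ∈ S → False := by
    intro a b hab ha hb
    have hb1 : (a:ℝ) + 1 ≤ b := by exact_mod_cast hab
    have hmem : (a:ℝ) + 2⁻¹ ∈ Icc (a:ℝ) (b:ℝ) := ⟨by linarith, by linarith⟩
    have hSmem := hS.ordConnected.out ha hb hmem
    obtain ⟨z, hz⟩ := hsub _ hSmem
    have : (2*a+1 : ℤ) = (2*z : ℤ) := by
      have : (2*a+1 : ℝ) = (2*z : ℝ) := by push_cast; linarith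
      exact_mod_cast this
    omega
  obtain ⟨zx, rfl⟩ := hsub x hx
  obtain ⟨zy, rfl⟩ := hsub y hy
  rcases lt_trichotomy zx zy with h | h | h
  · exact absurd (key _ _ h hx hy) not_false
  · rw [h]
  · exact absurd (key _ _ h hy hx) not_false

/- ## the lift construction -/
section Lift
variable (g : Torus → Torus) (N : ℕ)

def gridA : ℕ → ℝ
  | 0 => rep (g 0)
  | (j+1) => gridA j + rep (g ((((j:ℝ)+1)/N : ℝ) : Torus) - g (((j:ℝ)/N : ℝ) : Torus))

def liftG (r : ℝ) : ℝ :=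
  gridA g N ⌊r * N⌋₊ + rep (g (r : Torus) - g (((⌊r * N⌋₊ : ℝ)/N : ℝ) : Torus))

lemma gridA_coe (j : ℕ) : ((gridA g N j : ℝ) : Torus) = g (((j:ℝ)/N : ℝ) : Torus) := by
  induction j with
  | zero => simp [gridA, rep_coe]
  | succ j ih =>
    have : ((gridA g N (j+1) : ℝ) : Torus)
        = ((gridA g N j : ℝ) : Torus) + ((rep (g ((((j:ℝ)+1)/N : ℝ) : Torus) - g (((j:ℝ)/N : ℝ) : Torus)) : ℝ) : Torus) := by
      rw [gridA]; push_cast; rfl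
    rw [this, ih, rep_coe]
    push_cast
    abel

lemma liftG_coe (r : ℝ) : ((liftG g N r : ℝ) : Torus) = g (r : Torus) := by
  have : ((liftG g N r : ℝ) : Torus)
      = ((gridA g N ⌊r * N⌋₊ : ℝ) : Torus)
        + ((rep (g (r : Torus) - g (((⌊r * N⌋₊ : ℝ)/N : ℝ) : Torus)) : ℝ) : Torus) := by
    rw [liftG]; push_cast; rfl
  rw [this, gridA_coe, rep_coe]
  abel

variable {N}

lemma floor_grid (hN : 0 < N) {j : ℕ} {r : ℝ}
    (h1 : (j:ℝ)/N ≤ r) (h2 : r < ((j:ℝ)+1)/N) : ⌊r * N⌋₊ = j := by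
  have hN' : (0:ℝ) < N := by exact_mod_cast hN
  rw [Nat.floor_eq_iff]
  constructor
  · calc (j:ℝ) = ((j:ℝ)/N) * N := by field_simp
    _ ≤ r * N := by apply mul_le_mul_of_nonneg_right h1 hN'.le
  · calc r * N < (((j:ℝ)+1)/N) * N := by apply mul_lt_mul_of_pos_right h2 hN'
    _ = (j:ℝ)+1 := by field_simp
  · have hr0 : (0:ℝ) ≤ r := le_trans (by positivity) h1
    exact mul_nonneg hr0 hN'.le

lemma liftG_eqOn (hN : 0 < N) (j : ℕ) :
    EqOn (liftG g N)
      (fun r => gridA g N j + rep (g (r : Torus) - g (((j:ℝ)/N : ℝ) : Torus)))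
      (Icc ((j:ℝ)/N) (((j:ℝ)+1)/N)) := by
  intro r hr
  have hN' : (0:ℝ) < N := by exact_mod_cast hN
  rcases lt_or_eq_of_le hr.2 with h | h
  · have hfl : ⌊r * N⌋₊ = j := floor_grid hN hr.1 h
    simp only [liftG, hfl]
  · have hfl : ⌊r * N⌋₊ = j + 1 := by
      have : r * N = (j:ℝ) + 1 := by rw [h]; field_simp
      rw [this]
      rw [show ((j:ℝ)+1) = ((j+1 : ℕ) : ℝ) by push_cast; ring]
      exact Nat.floor_natCast _
    simp only [liftG, hfl]
    rw [show (((j+1 : ℕ) : ℝ)) = (j:ℝ)+1 by push_cast; ring, ← h]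
    rw [sub_self, rep_zero, add_zero]
    show gridA g N (j+1) = _
    rw [gridA, h]

lemma liftG_contOn_piece (hg : Continuous g) (hN : 0 < N)
    (hmod : ∀ u v : ℝ, |u - v| ≤ 1/N → ‖g (u : Torus) - g (v : Torus)‖ < 4⁻¹) (j : ℕ) :
    ContinuousOn (liftG g N) (Icc ((j:ℝ)/N) (((j:ℝ)+1)/N)) := by
  have hN' : (0:ℝ) < N := by exact_mod_cast hN
  refine ContinuousOn.congr (f := fun r : ℝ => gridA g N j + rep (g (r : Torus) - g (((j:ℝ)/N : ℝ) : Torus))) ?_ (liftG_eqOn g hN j)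
  intro r hr
  have hinner : Continuous (fun r : ℝ => g (r : Torus) - g (((j:ℝ)/N : ℝ) : Torus)) :=
    (hg.comp (AddCircle.continuous_mk' 1)).sub continuous_const
  have hnorm : ‖g (r : Torus) - g (((j:ℝ)/N : ℝ) : Torus)‖ < 2⁻¹ := by
    have habs : |r - (j:ℝ)/N| ≤ 1/N := by
      rw [abs_le]
      have h2 : ((j:ℝ)+1)/N = (j:ℝ)/N + 1/N := by ring
      constructor
      · have := hr.1; linarith [one_div_pos.mpr hN']
      · have := hr.2; rw [h2] at this; linarith
    linarith [hmod r ((j:ℝ)/N) habs]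
  have hcw : ContinuousWithinAt (fun r : ℝ => rep (g (r : Torus) - g (((j:ℝ)/N : ℝ) : Torus)))
      (Icc ((j:ℝ)/N) (((j:ℝ)+1)/N)) r :=
    ContinuousAt.comp_continuousWithinAt (g := rep)
      (f := fun r : ℝ => g (r : Torus) - g (((j:ℝ)/N : ℝ) : Torus))
      (rep_continuousAt hnorm) hinner.continuousWithinAt
  exact continuousWithinAt_const.add hcw

lemma liftG_contOn (hg : Continuous g) (hN : 0 < N)
    (hmod : ∀ u v : ℝ, |u - v| ≤ 1/N → ‖g (u : Torus) - g (v : Torus)‖ < 4⁻¹) (M : ℕ) :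
    ContinuousOn (liftG g N) (Icc 0 ((M:ℝ)/N)) := by
  have hN' : (0:ℝ) < N := by exact_mod_cast hN
  induction M with
  | zero => simp only [Nat.cast_zero, zero_div, Icc_self]; exact continuousOn_singleton _ _
  | succ M ih =>
    have hcast : ((M+1 : ℕ) : ℝ) = (M:ℝ) + 1 := by push_cast; ring
    rw [hcast, ← Icc_union_Icc_eq_Icc (a := (0:ℝ)) (b := (M:ℝ)/N) (c := ((M:ℝ)+1)/N)]
    · exact contOn_union isClosed_Icc isClosed_Icc ih (liftG_contOn_piece g hg hN hmod M)
    · positivity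
    · have h1 : (M:ℝ) ≤ (M:ℝ)+1 := by linarith
      exact div_le_div_of_nonneg_right h1 hN'.le


lemma liftG_gap (r : ℝ) : ∃ z : ℤ, liftG g N (r+1) - liftG g N r = z := by
  have h1 : ((liftG g N (r+1) : ℝ) : Torus) = ((liftG g N r : ℝ) : Torus) := by
    rw [liftG_coe, liftG_coe, AddCircle.coe_add_period 1 r]
  have h2 := QuotientAddGroup.eq_iff_sub_mem.mp h1
  obtain ⟨z, hz⟩ := AddSubgroup.mem_zmultiples_iff.mp h2
  exact ⟨z, by rw [← hz, zsmul_eq_mul, mul_one]⟩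

lemma liftG_gap_const (hg : Continuous g) (hN : 0 < N)
    (hmod : ∀ u v : ℝ, |u - v| ≤ 1/N → ‖g (u : Torus) - g (v : Torus)‖ < 4⁻¹) :
    ∀ r ∈ Icc (0:ℝ) 1, liftG g N (r+1) - liftG g N r = liftG g N 1 - liftG g N 0 := by
  have hN' : (0:ℝ) < N := by exact_mod_cast hN
  have hc2 : ContinuousOn (liftG g N) (Icc 0 2) := by
    have h := liftG_contOn g hg hN hmod (2*N)
    have h2 : ((2*N : ℕ) : ℝ)/N = 2 := by
      rw [div_eq_iff hN'.ne']; push_cast; ring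
    rwa [h2] at h
  set D := fun r : ℝ => liftG g N (r+1) - liftG g N r with hD
  have hDc : ContinuousOn D (Icc 0 1) := by
    apply ContinuousOn.sub
    · apply hc2.comp (continuous_id.add continuous_const).continuousOn
      intro x hx
      exact ⟨by simp; linarith [hx.1], by simp; linarith [hx.2]⟩
    · exact hc2.mono (Icc_subset_Icc le_rfl one_le_two)
  have himg : IsPreconnected (D '' Icc 0 1) := isPreconnected_Icc.image D hDc
  intro r hr
  have h0 : (0:ℝ) ∈ Icc (0:ℝ) 1 := ⟨le_rfl, zero_le_one⟩
  have := preconn_int himg ?_ (mem_image_of_mem D hr) (mem_image_of_mem D h0)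
  · simpa [hD] using this
  · rintro x ⟨s, _, rfl⟩
    obtain ⟨z, hz⟩ := liftG_gap (N := N) g s
    exact ⟨z, hz⟩

end Lift

/- ## integral shift lemma -/
lemma shift_integral {G : ℝ → ℝ} (hc2 : ContinuousOn G (Icc 0 2)) {k : ℝ}
    (hk : ∀ r ∈ Icc (0:ℝ) 1, G (r+1) = G r + k) {c : ℝ} (hc : c ∈ Icc (0:ℝ) 1) :
    ∫ r in c..(c+1), G r = (∫ r in (0:ℝ)..1, G r) + k * c := by
  obtain ⟨hc0, hc1⟩ := hc
  have hint : ∀ a b : ℝ, 0 ≤ a → b ≤ 2 → a ≤ b → IntervalIntegrable G MeasureTheory.volume a b := by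
    intro a b ha hb hab
    apply ContinuousOn.intervalIntegrable
    rw [uIcc_of_le hab]
    exact hc2.mono (Icc_subset_Icc ha hb)
  have h1 : ∫ r in (1:ℝ)..(c+1), G r = ∫ r in (0:ℝ)..c, G (r+1) := by
    rw [intervalIntegral.integral_comp_add_right (a := 0) (b := c) (f := G) 1]
    norm_num
  have h2 : ∫ r in (0:ℝ)..c, G (r+1) = (∫ r in (0:ℝ)..c, G r) + k * c := by
    rw [intervalIntegral.integral_congr (g := fun r => G r + k)
      (fun r hr => by
        rw [uIcc_of_le hc0] at hr
        exact hk r ⟨hr.1, le_trans hr.2 hc1⟩)]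
    rw [intervalIntegral.integral_add (hint 0 c le_rfl (by linarith) hc0) intervalIntegrable_const]
    rw [intervalIntegral.integral_const]
    simp [smul_eq_mul]
    ring
  have h3 := intervalIntegral.integral_add_adjacent_intervals
    (hint c 1 hc0 (by linarith) hc1) (hint 1 (c+1) (by linarith) (by linarith) (by linarith))
  have h4 := intervalIntegral.integral_add_adjacent_intervals
    (hint 0 c le_rfl (by linarith) hc0) (hint c 1 hc0 (by linarith) hc1)
  linarith [h1, h2, h3, h4]

/- ## mean value attainment -/
lemma exists_eq_mean {F : ℝ → ℝ} (hF : ContinuousOn F (Icc 0 1)) {A : ℝ}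
    (hA : ∫ r in (0:ℝ)..1, F r = A) : ∃ r ∈ Icc (0:ℝ) 1, F r = A := by
  have hFu : ContinuousOn F (uIcc (0:ℝ) 1) := by rwa [uIcc_of_le zero_le_one]
  have hFi : IntervalIntegrable F MeasureTheory.volume 0 1 := hFu.intervalIntegrable
  have hu : ∃ u ∈ Icc (0:ℝ) 1, F u ≤ A := by
    by_contra hcon
    push_neg at hcon
    have hpos : 0 < ∫ r in (0:ℝ)..1, (F r - A) :=
      intervalIntegral.intervalIntegral_pos_of_pos_on (hFi.sub intervalIntegrable_const)
        (fun x hx => sub_pos.mpr (hcon x (Ioo_subset_Icc_self hx))) zero_lt_one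
    rw [intervalIntegral.integral_sub hFi intervalIntegrable_const, hA,
      intervalIntegral.integral_const] at hpos
    simp at hpos
  have hv : ∃ v ∈ Icc (0:ℝ) 1, A ≤ F v := by
    by_contra hcon
    push_neg at hcon
    have hpos : 0 < ∫ r in (0:ℝ)..1, (A - F r) :=
      intervalIntegral.intervalIntegral_pos_of_pos_on (intervalIntegrable_const.sub hFi)
        (fun x hx => sub_pos.mpr (hcon x (Ioo_subset_Icc_self hx))) zero_lt_one
    rw [intervalIntegral.integral_sub intervalIntegrable_const hFi, hA,
      intervalIntegral.integral_const] at hpos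
    simp at hpos
  obtain ⟨u, hu1, hu2⟩ := hu
  obtain ⟨v, hv1, hv2⟩ := hv
  have hsub : uIcc u v ⊆ Icc (0:ℝ) 1 := by
    rcases le_total u v with h | h
    · rw [uIcc_of_le h]; exact Icc_subset_Icc hu1.1 hv1.2
    · rw [uIcc_of_ge h]; exact Icc_subset_Icc hv1.1 hu1.2
  have hmem : A ∈ uIcc (F u) (F v) := mem_uIcc.mpr (Or.inl ⟨hu2, hv2⟩)
  obtain ⟨r, hr, hrA⟩ := intermediate_value_uIcc (hF.mono hsub) hmem
  exact ⟨r, hsub hr, hrA⟩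

/- ## key lemma: sums of shifted copies of g hit m • γ̄ -/
lemma key_lemma (g : Torus → Torus) (hg : Continuous g) :
    ∃ γ0 : Torus, ∀ m : ℕ, 0 < m → ∀ c : Fin m → Torus,
      ∃ t : Torus, ∑ i, g (t + c i) = m • γ0 := by
  obtain ⟨δ₀, hδ₀, hδ⟩ := Metric.uniformContinuous_iff.mp
    (CompactSpace.uniformContinuous_of_continuous hg) 4⁻¹ (by norm_num)
  obtain ⟨n0, hn0⟩ := exists_nat_one_div_lt hδ₀
  set N : ℕ := n0 + 1 with hNdef
  have hN : 0 < N := Nat.succ_pos _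
  have hN' : (0:ℝ) < N := by exact_mod_cast hN
  have h1N : (1:ℝ)/N < δ₀ := by rw [hNdef]; push_cast; exact hn0
  have hmod : ∀ u v : ℝ, |u - v| ≤ 1/N → ‖g (u : Torus) - g (v : Torus)‖ < 4⁻¹ := by
    intro u v huv
    have hsub : ((u:ℝ) : Torus) - ((v:ℝ) : Torus) = (((u - v : ℝ)) : Torus) := by
      rw [AddCircle.coe_sub]
    have hduv : dist ((u:ℝ) : Torus) ((v:ℝ) : Torus) < δ₀ := by
      rw [dist_eq_norm, hsub]
      calc ‖(((u - v : ℝ)) : Torus)‖ ≤ |u - v| := norm_coe_le _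
      _ ≤ 1/N := huv
      _ < δ₀ := h1N
    have := hδ hduv
    rwa [dist_eq_norm] at this
  set G := liftG g N with hGdef
  have hc2 : ContinuousOn G (Icc 0 2) := by
    have h := liftG_contOn g hg hN hmod (2*N)
    have h2 : ((2*N : ℕ) : ℝ)/N = 2 := by rw [div_eq_iff hN'.ne']; push_cast; ring
    rwa [h2] at h
  obtain ⟨k, hkz⟩ := liftG_gap (N := N) g 0
  rw [zero_add] at hkz
  have hk : ∀ r ∈ Icc (0:ℝ) 1, G (r+1) = G r + (k:ℝ) := by
    intro r hr
    have h := liftG_gap_const g hg hN hmod r hr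
    rw [hkz] at h
    linarith
  set γ : ℝ := ∫ r in (0:ℝ)..1, G r with hγ
  refine ⟨((γ:ℝ) : Torus), ?_⟩
  intro m hm c
  set c' : Fin m → ℝ := fun i => (AddCircle.equivIco 1 0 (c i) : ℝ) with hc'
  have hc'mem : ∀ i, c' i ∈ Ico (0:ℝ) 1 := by
    intro i
    have h := (AddCircle.equivIco 1 0 (c i)).2
    simpa using h
  have hc'coe : ∀ i, ((c' i : ℝ) : Torus) = c i := by
    intro i
    change (AddCircle.equivIco 1 0).symm _ = c i
    exact (AddCircle.equivIco 1 0).symm_apply_apply (c i)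
  set F : ℝ → ℝ := fun r => ∑ i, G (r + c' i) with hF
  have hpiece : ∀ i : Fin m, ContinuousOn (fun r : ℝ => G (r + c' i)) (Icc 0 1) := by
    intro i
    apply hc2.comp (continuous_id.add continuous_const).continuousOn
    intro x hx
    have h1 := (hc'mem i).1
    have h2 := (hc'mem i).2
    exact ⟨by show (0:ℝ) ≤ x + c' i; linarith [hx.1], by show x + c' i ≤ 2; linarith [hx.2]⟩
  have hFc : ContinuousOn F (Icc 0 1) := continuousOn_finset_sum _ (fun i _ => hpiece i)
  have main : ∃ r : ℝ, ((F r : ℝ) : Torus) = (((m:ℝ) * γ : ℝ) : Torus) := by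
    by_cases hk0 : k = 0
    · -- degree zero: mean value
      have heach : ∀ i : Fin m, (∫ r in (0:ℝ)..1, G (r + c' i)) = γ := by
        intro i
        rw [intervalIntegral.integral_comp_add_right (a := 0) (b := 1) (f := G) (c' i)]
        rw [show (0:ℝ) + c' i = c' i by ring, show (1:ℝ) + c' i = c' i + 1 by ring]
        rw [shift_integral hc2 hk ⟨(hc'mem i).1, (hc'mem i).2.le⟩]
        rw [hk0]
        simp
        exact hγ.symm
      have hInt : ∫ r in (0:ℝ)..1, F r = (m:ℝ) * γ := by
        rw [hF]
        rw [intervalIntegral.integral_finset_sum (fun i _ => by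
          apply ContinuousOn.intervalIntegrable
          rw [uIcc_of_le zero_le_one]
          exact hpiece i)]
        rw [Finset.sum_congr rfl (fun i _ => heach i)]
        simp [Finset.card_univ, nsmul_eq_mul]
      obtain ⟨r, _, hr⟩ := exists_eq_mean hFc hInt
      exact ⟨r, by rw [hr]⟩
    · -- nonzero degree: interval of length ≥ 1
      have hgap : F 1 - F 0 = (m:ℝ) * k := by
        rw [hF, ← Finset.sum_sub_distrib]
        have heach : ∀ i : Fin m, G (1 + c' i) - G (0 + c' i) = (k:ℝ) := by
          intro i
          rw [zero_add, show (1:ℝ) + c' i = c' i + 1 by ring,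
            hk (c' i) ⟨(hc'mem i).1, (hc'mem i).2.le⟩]
          ring
        rw [Finset.sum_congr rfl (fun i _ => heach i)]
        simp [Finset.card_univ, nsmul_eq_mul]
      set lo := min (F 0) (F 1) with hlo
      set hi := max (F 0) (F 1) with hhi
      have hlohi : 1 ≤ hi - lo := by
        have habs : hi - lo = |F 1 - F 0| := by
          rcases le_total (F 0) (F 1) with h | h
          · rw [hhi, hlo, sup_eq_right.mpr h, inf_eq_left.mpr h, abs_of_nonneg (by linarith)]
          · rw [hhi, hlo, sup_eq_left.mpr h, inf_eq_right.mpr h, abs_of_nonpos (by linarith)]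
            ring
        have h2 : (1:ℝ) ≤ |(k:ℝ)| := by
          have := Int.one_le_abs (by omega : k ≠ 0)
          exact_mod_cast this
        have h3 : (1:ℝ) ≤ (m:ℝ) := by exact_mod_cast hm
        have h4 : |F 1 - F 0| = (m:ℝ) * |(k:ℝ)| := by
          rw [hgap, abs_mul, abs_of_nonneg (by positivity : (0:ℝ) ≤ (m:ℝ))]
        nlinarith
      set z : ℤ := ⌈lo - (m:ℝ)*γ⌉ with hzdef
      have hz1 : lo ≤ (m:ℝ)*γ + z := by
        have := Int.le_ceil (lo - (m:ℝ)*γ)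
        rw [← hzdef] at this
        linarith
      have hz2 : (m:ℝ)*γ + z ≤ hi := by
        have := Int.ceil_lt_add_one (lo - (m:ℝ)*γ)
        rw [← hzdef] at this
        linarith
      have hmemv : (m:ℝ)*γ + z ∈ uIcc (F 0) (F 1) := by
        rw [Set.uIcc]
        exact ⟨hz1, hz2⟩
      obtain ⟨r, hr, hrv⟩ := intermediate_value_uIcc
        (by rwa [uIcc_of_le zero_le_one] : ContinuousOn F (uIcc (0:ℝ) 1)) hmemv
      refine ⟨r, ?_⟩
      rw [hrv]
      rw [QuotientAddGroup.eq_iff_sub_mem]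
      have : (m:ℝ)*γ + z - (m:ℝ)*γ = (z:ℝ) := by ring
      rw [this]
      exact ⟨z, by simp⟩
  obtain ⟨r, hrmain⟩ := main
  refine ⟨((r:ℝ) : Torus), ?_⟩
  have hsum : (∑ i, g (((r:ℝ) : Torus) + c i)) = ((F r : ℝ) : Torus) := by
    have hmap : ((F r : ℝ) : Torus) = ∑ i, ((G (r + c' i) : ℝ) : Torus) := by
      rw [hF]
      exact map_sum (QuotientAddGroup.mk' (AddSubgroup.zmultiples (1:ℝ))) _ _
    rw [hmap]
    apply Finset.sum_congr rfl
    intro i _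
    rw [liftG_coe]
    congr 1
    rw [AddCircle.coe_add, hc'coe]
  rw [hsum, hrmain]
  have : (((m:ℝ) * γ : ℝ) : Torus) = m • ((γ:ℝ) : Torus) := by
    rw [← nsmul_eq_mul]
    exact map_nsmul (QuotientAddGroup.mk' (AddSubgroup.zmultiples (1:ℝ))) _ _
  rw [this]


/-- The skew product `T_h(x,t) = (Tx, t + h(x))` on `X × 𝕋`. -/
def skewOne {X : Type*} (T : X → X) (h : X → Torus) : X × Torus → X × Torus :=
  fun p => (T p.1, p.2 + h p.1)

/-- The double skew product `T_{h,g}(x,t,s) = (Tx, t + h(x), s + g(t))` on `X × 𝕋²`. -/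
def skewTwo {X : Type*} (T : X → X) (h : X → Torus) (g : Torus → Torus) :
    X × Torus × Torus → X × Torus × Torus :=
  fun p => (T p.1, p.2.1 + h p.1, p.2.2 + g p.2.1)

lemma skewOne_iter {X : Type*} (T : X → X) (h : X → Torus) (m : ℕ) (x : X) (t : Torus) :
    (skewOne T h)^[m] (x, t) = (T^[m] x, t + ∑ j ∈ Finset.range m, h (T^[j] x)) := by
  induction m with
  | zero => simp
  | succ m ih =>
    rw [Function.iterate_succ_apply', ih, skewOne]
    refine Prod.ext ?_ ?_
    · exact (Function.iterate_succ_apply' T m x).symm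
    · show t + ∑ j ∈ Finset.range m, h (T^[j] x) + h (T^[m] x) = _
      rw [Finset.sum_range_succ, add_assoc]

lemma skewTwo_iter {X : Type*} (T : X → X) (h : X → Torus) (g : Torus → Torus)
    (m : ℕ) (x : X) (t s : Torus) :
    (skewTwo T h g)^[m] (x, t, s) =
      (T^[m] x, t + ∑ j ∈ Finset.range m, h (T^[j] x),
        s + ∑ i ∈ Finset.range m, g (t + ∑ j ∈ Finset.range i, h (T^[j] x))) := by
  induction m with
  | zero => simp
  | succ m ih =>
    rw [Function.iterate_succ_apply', ih, skewTwo]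
    refine Prod.ext ?_ (Prod.ext ?_ ?_)
    · exact (Function.iterate_succ_apply' T m x).symm
    · show t + ∑ j ∈ Finset.range m, h (T^[j] x) + h (T^[m] x) = _
      rw [Finset.sum_range_succ, add_assoc]
    · show s + ∑ i ∈ Finset.range m, g (t + ∑ j ∈ Finset.range i, h (T^[j] x))
          + g (t + ∑ j ∈ Finset.range m, h (T^[j] x))
        = s + ∑ i ∈ Finset.range (m+1), g (t + ∑ j ∈ Finset.range i, h (T^[j] x))
      rw [Finset.sum_range_succ (fun i => g (t + ∑ j ∈ Finset.range i, h (T^[j] x))) m, add_assoc]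

theorem double_skew_bohr0_large_returns {X : Type*} [MetricSpace X] [CompactSpace X]
    (T : X → X) (hT : Continuous T) (h : X → Torus) (hh : Continuous h)
    (hyp : ∀ ε : ℝ, 0 < ε →
      IsBohr0 {m : ℕ | ∃ p : X × Torus,
        dist p.1 ((skewOne T h)^[m] p).1 + dist p.2 ((skewOne T h)^[m] p).2 < ε})
    (g : Torus → Torus) (hg : Continuous g) :
    ∀ ε : ℝ, 0 < ε →
      IsBohr0 {m : ℕ | ∃ p : X × Torus × Torus,
        dist p.1 ((skewTwo T h g)^[m] p).1 +
          dist p.2.1 ((skewTwo T h g)^[m] p).2.1 +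
          dist p.2.2 ((skewTwo T h g)^[m] p).2.2 < ε} := by
  intro ε hε
  obtain ⟨γ0, hγ0⟩ := key_lemma g hg
  obtain ⟨d, α, δ, hδpos, hA⟩ := hyp (ε/2) (by linarith)
  refine ⟨d+1, Fin.snoc α γ0, min δ (ε/2), lt_min hδpos (by linarith), ?_⟩
  intro n hn hsum
  have hsum' : (∑ i : Fin (d+1), ‖n • (Fin.snoc α γ0 : Fin (d+1) → Torus) i‖)
      = (∑ i : Fin d, ‖n • α i‖) + ‖n • γ0‖ := by
    rw [Fin.sum_univ_castSucc]
    simp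
  rw [hsum'] at hsum
  have hnormnonneg : (0:ℝ) ≤ ‖n • γ0‖ := norm_nonneg _
  have hsumnonneg : (0:ℝ) ≤ ∑ i : Fin d, ‖n • α i‖ :=
    Finset.sum_nonneg (fun i _ => norm_nonneg _)
  have h1 : (∑ i : Fin d, ‖n • α i‖) < δ := by
    have := lt_of_lt_of_le hsum (min_le_left _ _)
    linarith
  have h2 : ‖n • γ0‖ < ε/2 := by
    have := lt_of_lt_of_le hsum (min_le_right _ _)
    linarith
  obtain ⟨p, hp⟩ := hA n hn h1
  obtain ⟨x, t0⟩ := p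
  rw [skewOne_iter] at hp
  simp only at hp
  obtain ⟨t, ht⟩ := hγ0 n hn (fun i : Fin n => ∑ j ∈ Finset.range (i:ℕ), h (T^[j] x))
  refine ⟨(x, t, 0), ?_⟩
  rw [skewTwo_iter]
  simp only
  have e2 : dist t (t + ∑ j ∈ Finset.range n, h (T^[j] x))
      = dist t0 (t0 + ∑ j ∈ Finset.range n, h (T^[j] x)) := by
    rw [dist_self_add_right, dist_self_add_right]
  have e3 : dist (0:Torus) (0 + ∑ i ∈ Finset.range n, g (t + ∑ j ∈ Finset.range i, h (T^[j] x)))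
      = ‖n • γ0‖ := by
    have hsum2 : (∑ i ∈ Finset.range n, g (t + ∑ j ∈ Finset.range i, h (T^[j] x))) = n • γ0 := by
      rw [← Fin.sum_univ_eq_sum_range (fun i => g (t + ∑ j ∈ Finset.range i, h (T^[j] x))) n]
      exact ht
    rw [hsum2, dist_self_add_right]
  rw [e2, e3]
  linarith [hp]
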